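/- Let f : {0,1}^n → {0,1} be a monotone function with certificate complexity at most k and critical probability p(f). Then for every coordinate i, p(f_{x_i=0}) − p(f) ≥ p(f)·Inf_{i,p(f)}^⊕[f]/k, and symmetrically p(f) − p(f_{x_i=1}) ≥ (1−p(f))·Inf_{i,p(f)}^⊕[f]/k (whenever the relevant restrictions are non-constant so that their critical probabilities are defined). -/

import Mathlib

open Finset

/-- Flip coordinate `i` of `x`. -/
def flipAt {n : ℕ} (x : Fin n → Bool) (i : Fin n) : Fin n → Bool :=
  Function.update x i (!x i)

/-- The `p`-biased weight (probability) of the point `x` in the product distribution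
where each bit is `1` independently with probability `p`. -/
noncomputable def w {n : ℕ} (p : ℝ) (x : Fin n → Bool) : ℝ :=
  ∏ i, if x i then p else 1 - p

/-- The `p`-biased expectation of `f`. -/
noncomputable def Ep {n : ℕ} (p : ℝ) (f : (Fin n → Bool) → Bool) : ℝ :=
  ∑ x, w p x * (if f x then 1 else 0)

/-- The `p`-biased flip influence of coordinate `i` on `f`:
`Pr_{x ∼ {0,1}^n_p}[f(x) ≠ f(x^{⊕i})]`. -/
noncomputable def flipInf {n : ℕ} (i : Fin n) (p : ℝ) (f : (Fin n → Bool) → Bool) : ℝ :=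
  ∑ x, w p x * (if f (flipAt x i) ≠ f x then 1 else 0)

/-- The `p`-biased rerandomized influence of coordinate `i` on `f`:
`2·Pr[f(x) ≠ f(x^{∼i})]`, where `x^{∼i}` has coordinate `i` resampled `p`-biased. -/
noncomputable def rerandInf {n : ℕ} (i : Fin n) (p : ℝ) (f : (Fin n → Bool) → Bool) : ℝ :=
  2 * ∑ x, ∑ b : Bool, w p x * (if b then p else 1 - p) *
    (if f (Function.update x i b) ≠ f x then 1 else 0)

/-- The `p`-biased variance of `f`. -/
noncomputable def Varp {n : ℕ} (p : ℝ) (f : (Fin n → Bool) → Bool) : ℝ :=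
  Ep p f * (1 - Ep p f)

/-- The restriction of `f` fixing coordinate `i` to the bit `b`
(viewed as a function on the full cube that ignores coordinate `i`). -/
def restrict {n : ℕ} (f : (Fin n → Bool) → Bool) (i : Fin n) (b : Bool) :
    (Fin n → Bool) → Bool :=
  fun x => f (Function.update x i b)

/-- `S` is a certificate for `f`'s value on `x`. -/
def IsCert {n : ℕ} (f : (Fin n → Bool) → Bool) (x : Fin n → Bool) (S : Finset (Fin n)) : Prop :=
  ∀ y, (∀ i ∈ S, y i = x i) → f y = f x

/-- `f` has certificate complexity at most `k`. -/
def CertLe {n : ℕ} (f : (Fin n → Bool) → Bool) (k : ℕ) : Prop :=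
  ∀ x, ∃ S : Finset (Fin n), IsCert f x S ∧ S.card ≤ k

section Aux
variable {n : ℕ}

lemma flipAt_apply_self (x : Fin n → Bool) (i : Fin n) : flipAt x i i = !x i := by
  simp [flipAt]

lemma flipAt_apply_ne (x : Fin n → Bool) {i j : Fin n} (h : j ≠ i) : flipAt x i j = x j := by
  simp [flipAt, Function.update_of_ne h]

lemma flipAt_flipAt (x : Fin n → Bool) (i : Fin n) : flipAt (flipAt x i) i = x := by
  funext j
  by_cases h : j = i
  · subst h; simp [flipAt]
  · simp [flipAt, Function.update_of_ne h]

lemma flipAt_bijective (i : Fin n) : Function.Bijective (flipAt · i) :=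
  Function.bijective_iff_has_inverse.2
    ⟨(flipAt · i), fun x => flipAt_flipAt x i, fun x => flipAt_flipAt x i⟩

lemma sum_flip (i : Fin n) (G : (Fin n → Bool) → ℝ) :
    ∑ x, G (flipAt x i) = ∑ x, G x :=
  Fintype.sum_bijective _ (flipAt_bijective i) _ _ (fun _ => rfl)

lemma sum_split (i : Fin n) (H : (Fin n → Bool) → ℝ) :
    ∑ x, H x = ∑ x, (if x i then H x + H (flipAt x i) else 0) := by
  have h1 : ∑ x, H x = ∑ x, ((if x i then H x else 0) + (if x i then 0 else H x)) := by
    apply Fintype.sum_congr; intro x; cases h : x i <;> simp [h]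
  rw [h1, Finset.sum_add_distrib]
  have h2 : ∑ x, (if x i then (0:ℝ) else H x) = ∑ x, (if x i then H (flipAt x i) else 0) := by
    rw [← sum_flip i (fun x => if x i then (0:ℝ) else H x)]
    apply Fintype.sum_congr; intro x
    cases h : x i <;> simp [flipAt_apply_self, h]
  rw [h2, ← Finset.sum_add_distrib]
  apply Fintype.sum_congr; intro x; cases h : x i <;> simp [h]

lemma sum_eq_of_pair (i : Fin n) (A B : (Fin n → Bool) → ℝ)
    (h : ∀ x, x i = true → A x + A (flipAt x i) = B x + B (flipAt x i)) :
    ∑ x, A x = ∑ x, B x := by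
  rw [sum_split i A, sum_split i B]
  apply Fintype.sum_congr; intro x
  cases hx : x i
  · simp
  · simp only [if_true]
    exact h x hx

noncomputable def wRest (p : ℝ) (i : Fin n) (x : Fin n → Bool) : ℝ :=
  ∏ j ∈ Finset.univ.erase i, if x j then p else 1 - p

lemma w_eq_wRest (p : ℝ) (i : Fin n) (x : Fin n → Bool) :
    w p x = (if x i then p else 1 - p) * wRest p i x := by
  rw [w, wRest, ← Finset.mul_prod_erase _ _ (Finset.mem_univ i)]

lemma wRest_congr {p : ℝ} {i : Fin n} {x y : Fin n → Bool}
    (h : ∀ j, j ≠ i → x j = y j) : wRest p i x = wRest p i y := by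
  apply Finset.prod_congr rfl; intro j hj
  rw [h j (Finset.ne_of_mem_erase hj)]

lemma wRest_flipAt (p : ℝ) (i : Fin n) (x : Fin n → Bool) :
    wRest p i (flipAt x i) = wRest p i x :=
  wRest_congr (fun _ hj => flipAt_apply_ne x hj)

lemma update_self_of_eq {x : Fin n → Bool} {j : Fin n} (h : x j = true) :
    Function.update x j true = x := by
  rw [← h]; exact Function.update_eq_self j x

lemma flip_eq_update_false {x : Fin n → Bool} {j : Fin n} (h : x j = true) :
    flipAt x j = Function.update x j false := by
  rw [flipAt, h]; rfl

noncomputable def pivInd (g : (Fin n → Bool) → Bool) (j : Fin n) (x : Fin n → Bool) : ℝ :=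
  if g (Function.update x j true) ≠ g (Function.update x j false) then 1 else 0

lemma update_flipAt (x : Fin n → Bool) (j : Fin n) (b : Bool) :
    Function.update (flipAt x j) j b = Function.update x j b := by
  rw [flipAt, Function.update_idem]

lemma pivInd_flipAt (g : (Fin n → Bool) → Bool) (j : Fin n) (x : Fin n → Bool) :
    pivInd g j (flipAt x j) = pivInd g j x := by
  unfold pivInd
  rw [update_flipAt, update_flipAt]

lemma mono_pointwise {g : (Fin n → Bool) → Bool}
    (hg : ∀ x y, (∀ j, x j ≤ y j) → g x ≤ g y) {x : Fin n → Bool} {j : Fin n}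
    (hx : x j = true) :
    (if g x then (1:ℝ) else 0) - (if g (flipAt x j) then 1 else 0) = pivInd g j x := by
  have hle : g (flipAt x j) ≤ g x := by
    apply hg; intro j'
    by_cases h : j' = j
    · subst h; rw [flipAt_apply_self, hx]; exact Bool.false_le _
    · rw [flipAt_apply_ne x h]
  rw [pivInd, update_self_of_eq hx, ← flip_eq_update_false hx]
  cases h1 : g x <;> cases h2 : g (flipAt x j)
  · norm_num
  · rw [h1, h2] at hle; exact absurd hle (by decide)
  · norm_num
  · norm_num

lemma hasDerivAt_w (x : Fin n → Bool) (p : ℝ) :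
    HasDerivAt (fun q => w q x)
      (∑ j, wRest p j x * (if x j then 1 else -1)) p := by
  have h : ∀ j : Fin n, j ∈ Finset.univ →
      HasDerivAt (fun q : ℝ => if x j then q else 1 - q) (if x j then 1 else -1) p := by
    intro j _
    cases hx : x j
    · simpa using (hasDerivAt_id' p).const_sub (1:ℝ)
    · simpa using hasDerivAt_id' p
  have h2 := HasDerivAt.fun_finsetProd h
  exact h2

noncomputable def pivSum (g : (Fin n → Bool) → Bool) (j : Fin n) (p : ℝ) : ℝ :=
  ∑ x, w p x * pivInd g j x

lemma hasDerivAt_Ep (g : (Fin n → Bool) → Bool)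
    (hg : ∀ x y, (∀ j, x j ≤ y j) → g x ≤ g y) (p : ℝ) :
    HasDerivAt (fun q => Ep q g) (∑ j, pivSum g j p) p := by
  have h1 : HasDerivAt (fun q => Ep q g)
      (∑ x, (∑ j, wRest p j x * (if x j then 1 else -1)) * (if g x then (1:ℝ) else 0)) p := by
    unfold Ep
    exact HasDerivAt.fun_sum (fun x _ => (hasDerivAt_w x p).mul_const _)
  convert h1 using 1
  have h2 : ∀ j : Fin n,
      pivSum g j p = ∑ x, wRest p j x * (if x j then 1 else -1) * (if g x then (1:ℝ) else 0) := by
    intro j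
    rw [pivSum]
    apply sum_eq_of_pair j
    intro x hx
    have hwr := wRest_flipAt p j x
    have hpi := pivInd_flipAt g j x
    have hkey := mono_pointwise hg (j := j) hx
    have ht : (if x j = true then (1:ℝ) else -1) = 1 := by simp [hx]
    have hf : (if (flipAt x j) j = true then (1:ℝ) else -1) = -1 := by
      simp [flipAt_apply_self, hx]
    have hp1 : (if x j = true then p else 1 - p) = p := by simp [hx]
    have hp2 : (if (flipAt x j) j = true then p else 1 - p) = 1 - p := by
      simp [flipAt_apply_self, hx]
    rw [w_eq_wRest p j x, w_eq_wRest p j (flipAt x j), hwr, hpi, ht, hf, hp1, hp2]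
    linear_combination (-(wRest p j x)) * hkey
  calc ∑ j, pivSum g j p
      = ∑ j, ∑ x, wRest p j x * (if x j then 1 else -1) * (if g x then (1:ℝ) else 0) :=
        Finset.sum_congr rfl (fun j _ => h2 j)
    _ = ∑ x, ∑ j : Fin n, wRest p j x * (if x j then 1 else -1) * (if g x then (1:ℝ) else 0) :=
        Finset.sum_comm
    _ = ∑ x, (∑ j, wRest p j x * (if x j then 1 else -1)) * (if g x then (1:ℝ) else 0) := by
        apply Fintype.sum_congr; intro x; rw [Finset.sum_mul]

lemma sum_w (p : ℝ) : ∑ x : Fin n → Bool, w p x = 1 := by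
  classical
  have h := Finset.prod_univ_sum (t := fun _ : Fin n => (Finset.univ : Finset Bool))
    (f := fun _ b => if b then p else 1 - p)
  rw [Fintype.piFinset_univ] at h
  have h2 : ∑ x : Fin n → Bool, w p x
      = ∑ x : Fin n → Bool, ∏ j, if x j then p else 1 - p := rfl
  rw [h2, ← h]
  have h3 : ∀ j : Fin n, (∑ b : Bool, if b then p else 1 - p) = 1 := by
    intro j; simp
  rw [Finset.prod_congr rfl (fun j _ => h3 j), Finset.prod_const_one]

lemma w_nonneg {p : ℝ} (hp : p ∈ Set.Icc (0:ℝ) 1) (x : Fin n → Bool) : 0 ≤ w p x := by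
  apply Finset.prod_nonneg
  intro j _
  cases h : x j <;> simp [h] <;> [linarith [hp.2]; exact hp.1]

lemma w_pos {p : ℝ} (hp : p ∈ Set.Ioo (0:ℝ) 1) (x : Fin n → Bool) : 0 < w p x := by
  apply Finset.prod_pos
  intro j _
  cases h : x j <;> simp [h] <;> [linarith [hp.2]; exact hp.1]

lemma pivInd_nonneg (g : (Fin n → Bool) → Bool) (j : Fin n) (x : Fin n → Bool) :
    0 ≤ pivInd g j x := by
  unfold pivInd; split <;> norm_num

lemma pivSum_nonneg (g : (Fin n → Bool) → Bool) (j : Fin n) {p : ℝ}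
    (hp : p ∈ Set.Icc (0:ℝ) 1) : 0 ≤ pivSum g j p :=
  Finset.sum_nonneg fun x _ => mul_nonneg (w_nonneg hp x) (pivInd_nonneg g j x)

lemma sum_pivInd_le {g : (Fin n → Bool) → Bool} {k : ℕ} (hc : CertLe g k) (x : Fin n → Bool) :
    ∑ j, pivInd g j x ≤ (k : ℝ) := by
  obtain ⟨S, hS, hcard⟩ := hc x
  have hle : ∀ j, pivInd g j x ≤ if j ∈ S then (1:ℝ) else 0 := by
    intro j
    by_cases hj : j ∈ S
    · rw [if_pos hj]; unfold pivInd; split <;> norm_num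
    · rw [if_neg hj]
      have h1 : g (Function.update x j true) = g x :=
        hS _ (fun m hm => Function.update_of_ne (fun e => hj (by rw [← e]; exact hm)) _ _)
      have h2 : g (Function.update x j false) = g x :=
        hS _ (fun m hm => Function.update_of_ne (fun e => hj (by rw [← e]; exact hm)) _ _)
      unfold pivInd
      rw [if_neg]
      simp [h1, h2]
  calc ∑ j, pivInd g j x ≤ ∑ j, (if j ∈ S then (1:ℝ) else 0) :=
        Finset.sum_le_sum (fun j _ => hle j)
    _ = S.card := by simp
    _ ≤ k := by exact_mod_cast hcard

lemma sum_pivSum_le {g : (Fin n → Bool) → Bool} {k : ℕ} (hc : CertLe g k) {p : ℝ}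
    (hp : p ∈ Set.Icc (0:ℝ) 1) : ∑ j, pivSum g j p ≤ (k : ℝ) := by
  unfold pivSum
  rw [Finset.sum_comm]
  calc ∑ x, ∑ j : Fin n, w p x * pivInd g j x
      = ∑ x : Fin n → Bool, w p x * ∑ j, pivInd g j x := by
        apply Fintype.sum_congr; intro x; rw [Finset.mul_sum]
    _ ≤ ∑ x : Fin n → Bool, w p x * k := by
        apply Finset.sum_le_sum
        intro x _
        exact mul_le_mul_of_nonneg_left (sum_pivInd_le hc x) (w_nonneg hp x)
    _ = k := by rw [← Finset.sum_mul, sum_w, one_mul]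

lemma exists_pivotal {g : (Fin n → Bool) → Bool}
    (hg : ∀ x y, (∀ j, x j ≤ y j) → g x ≤ g y) (hnc : ∃ x y, g x ≠ g y) :
    ∃ j x, pivInd g j x = 1 := by
  classical
  obtain ⟨a, b, hab⟩ := hnc
  have hbot : g (fun _ => false) = false := by
    by_contra h
    have hb : g (fun _ => false) = true := by
      cases hh : g (fun _ => false)
      · exact absurd hh h
      · rfl
    have hall : ∀ y, g y = true := by
      intro y
      have h1 := hg (fun _ => false) y (fun j => Bool.false_le _)
      rw [hb] at h1
      cases hy : g y
      · rw [hy] at h1; exact absurd h1 (by decide)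
      · rfl
    exact hab ((hall a).trans (hall b).symm)
  have htop : g (fun _ => true) = true := by
    by_contra h
    have hb : g (fun _ => true) = false := by
      cases hh : g (fun _ => true)
      · rfl
      · exact absurd hh h
    have hall : ∀ y, g y = false := by
      intro y
      have h1 := hg y (fun _ => true) (fun j => Bool.le_true _)
      rw [hb] at h1
      cases hy : g y
      · rfl
      · rw [hy] at h1; exact absurd h1 (by decide)
    exact hab ((hall a).trans (hall b).symm)
  set z : ℕ → Fin n → Bool := fun m j => decide ((j : ℕ) < m) with hz
  have hz0 : g (z 0) = false := by
    have : z 0 = (fun _ => false) := funext fun j => by simp [hz]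
    rw [this, hbot]
  have hzn : g (z n) = true := by
    have : z n = (fun _ => true) := funext fun j => by simp [hz, j.isLt]
    rw [this, htop]
  have key : ∀ N : ℕ, g (z N) = true → ∃ m, g (z m) = false ∧ g (z (m + 1)) = true := by
    intro N
    induction N with
    | zero => intro h; rw [hz0] at h; exact absurd h (by decide)
    | succ N ih =>
      intro h
      cases hN : g (z N)
      · exact ⟨N, hN, h⟩
      · exact ih hN
  obtain ⟨m, hm0, hm1⟩ := key n hzn
  have hmn : m < n := by
    by_contra h
    push_neg at h
    have hzz : z m = z (m + 1) := by
      funext j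
      have hj := j.isLt
      simp only [hz]
      rw [decide_eq_decide]
      omega
    rw [hzz, hm1] at hm0
    exact absurd hm0 (by decide)
  refine ⟨⟨m, hmn⟩, z m, ?_⟩
  have h1 : Function.update (z m) ⟨m, hmn⟩ true = z (m + 1) := by
    funext j
    by_cases hj : j = ⟨m, hmn⟩
    · subst hj
      rw [Function.update_self]
      simp [hz]
    · rw [Function.update_of_ne hj]
      simp only [hz]
      rw [decide_eq_decide]
      have hne : (j : ℕ) ≠ m := fun e => hj (Fin.ext e)
      omega
  have h2 : Function.update (z m) ⟨m, hmn⟩ false = z m := by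
    have hv : z m ⟨m, hmn⟩ = false := by simp [hz]
    rw [← hv, Function.update_eq_self]
  rw [pivInd, h1, h2, hm1, hm0]
  norm_num

lemma Ep_strictMonoOn {g : (Fin n → Bool) → Bool}
    (hg : ∀ x y, (∀ j, x j ≤ y j) → g x ≤ g y) (hnc : ∃ x y, g x ≠ g y) :
    StrictMonoOn (fun p => Ep p g) (Set.Icc (0:ℝ) 1) := by
  apply strictMonoOn_of_deriv_pos (convex_Icc 0 1)
  · intro p _
    exact (hasDerivAt_Ep g hg p).differentiableAt.continuousAt.continuousWithinAt
  · intro p hp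
    rw [interior_Icc] at hp
    rw [(hasDerivAt_Ep g hg p).deriv]
    obtain ⟨j0, x0, hx0⟩ := exists_pivotal hg hnc
    have hpI : p ∈ Set.Icc (0:ℝ) 1 := ⟨hp.1.le, hp.2.le⟩
    have h2 : 0 < pivSum g j0 p := by
      unfold pivSum
      have hterm : 0 < w p x0 * pivInd g j0 x0 := by
        rw [hx0, mul_one]; exact w_pos hp x0
      refine lt_of_lt_of_le hterm ?_
      apply Finset.single_le_sum (f := fun x => w p x * pivInd g j0 x)
        (fun x _ => mul_nonneg (w_nonneg hpI x) (pivInd_nonneg g j0 x)) (Finset.mem_univ x0)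
    refine lt_of_lt_of_le h2 ?_
    exact Finset.single_le_sum (f := fun j => pivSum g j p)
      (fun j _ => pivSum_nonneg g j hpI) (Finset.mem_univ j0)

lemma Ep_lipschitz {g : (Fin n → Bool) → Bool} {k : ℕ}
    (hg : ∀ x y, (∀ j, x j ≤ y j) → g x ≤ g y) (hc : CertLe g k) {a b : ℝ}
    (ha : a ∈ Set.Icc (0:ℝ) 1) (hb : b ∈ Set.Icc (0:ℝ) 1) (hab : a ≤ b) :
    Ep b g - Ep a g ≤ k * (b - a) := by
  have hd : ∀ p : ℝ, HasDerivAt (fun q => (k:ℝ) * q - Ep q g) ((k:ℝ) * 1 - ∑ j, pivSum g j p) p :=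
    fun p => ((hasDerivAt_id p).const_mul ((k:ℝ))).sub (hasDerivAt_Ep g hg p)
  have hmono : MonotoneOn (fun p => (k:ℝ) * p - Ep p g) (Set.Icc 0 1) := by
    apply monotoneOn_of_deriv_nonneg (convex_Icc 0 1)
    · intro p _
      exact (hd p).differentiableAt.continuousAt.continuousWithinAt
    · intro p _
      exact (hd p).differentiableAt.differentiableWithinAt
    · intro p hp
      rw [interior_Icc] at hp
      rw [(hd p).deriv]
      have := sum_pivSum_le hc (p := p) ⟨hp.1.le, hp.2.le⟩
      linarith
  have h := hmono ha hb hab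
  simp only at h
  linarith

lemma Ep_const {g : (Fin n → Bool) → Bool} (c : Bool) (hgc : ∀ x, g x = c) (p : ℝ) :
    Ep p g = if c then 1 else 0 := by
  unfold Ep
  calc ∑ x, w p x * (if g x then (1:ℝ) else 0)
      = ∑ x : Fin n → Bool, w p x * (if c then 1 else 0) := by
        apply Fintype.sum_congr; intro x; rw [hgc]
    _ = (∑ x : Fin n → Bool, w p x) * (if c then 1 else 0) := by rw [Finset.sum_mul]
    _ = _ := by rw [sum_w, one_mul]

lemma Ep_split (f : (Fin n → Bool) → Bool) (i : Fin n) (p : ℝ) :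
    Ep p f = (1 - p) * Ep p (_root_.restrict f i false) + p * Ep p (_root_.restrict f i true) := by
  unfold Ep _root_.restrict
  rw [Finset.mul_sum, Finset.mul_sum, ← Finset.sum_add_distrib]
  apply sum_eq_of_pair i
  intro x hx
  have hp1 : (if x i = true then p else 1 - p) = p := by simp [hx]
  have hp2 : (if (flipAt x i) i = true then p else 1 - p) = 1 - p := by
    simp [flipAt_apply_self, hx]
  have hw1 : w p x = p * wRest p i x := by rw [w_eq_wRest p i x, hp1]
  have hw2 : w p (flipAt x i) = (1 - p) * wRest p i x := by
    rw [w_eq_wRest p i (flipAt x i), hp2, wRest_flipAt]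
  have hu1 : Function.update (flipAt x i) i false = Function.update x i false :=
    update_flipAt x i false
  have hu2 : Function.update (flipAt x i) i true = Function.update x i true :=
    update_flipAt x i true
  have hx1 : Function.update x i true = x := update_self_of_eq hx
  have hx0 : Function.update x i false = flipAt x i := (flip_eq_update_false hx).symm
  rw [hw1, hw2, hu1, hu2, hx1, hx0]
  ring

lemma flipInf_eq (f : (Fin n → Bool) → Bool)
    (hmono : ∀ x y, (∀ j, x j ≤ y j) → f x ≤ f y) (i : Fin n) (p : ℝ) :
    flipInf i p f = Ep p (_root_.restrict f i true) - Ep p (_root_.restrict f i false) := by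
  unfold flipInf Ep _root_.restrict
  rw [← Finset.sum_sub_distrib]
  apply sum_eq_of_pair i
  intro x hx
  have hp1 : (if x i = true then p else 1 - p) = p := by simp [hx]
  have hp2 : (if (flipAt x i) i = true then p else 1 - p) = 1 - p := by
    simp [flipAt_apply_self, hx]
  have hw1 : w p x = p * wRest p i x := by rw [w_eq_wRest p i x, hp1]
  have hw2 : w p (flipAt x i) = (1 - p) * wRest p i x := by
    rw [w_eq_wRest p i (flipAt x i), hp2, wRest_flipAt]
  have hu1 : Function.update (flipAt x i) i false = Function.update x i false :=
    update_flipAt x i false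
  have hu2 : Function.update (flipAt x i) i true = Function.update x i true :=
    update_flipAt x i true
  have hx1 : Function.update x i true = x := update_self_of_eq hx
  have hx0 : Function.update x i false = flipAt x i := (flip_eq_update_false hx).symm
  have hkey := mono_pointwise hmono (j := i) hx
  rw [pivInd, hx1, hx0] at hkey
  have hff : flipAt (flipAt x i) i = x := flipAt_flipAt x i
  rw [hw1, hw2, hu1, hu2, hx1, hx0, hff]
  have hsym : (if f x ≠ f (flipAt x i) then (1:ℝ) else 0)
      = (if f (flipAt x i) ≠ f x then 1 else 0) := by
    by_cases h : f x = f (flipAt x i) <;> simp [h, Ne, eq_comm]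
  linear_combination (-(p * wRest p i x)) * hsym + (-(wRest p i x)) * hkey

lemma flipInf_nonneg (i : Fin n) {p : ℝ} (hp : p ∈ Set.Icc (0:ℝ) 1)
    (f : (Fin n → Bool) → Bool) : 0 ≤ flipInf i p f := by
  apply Finset.sum_nonneg
  intro x _
  apply mul_nonneg (w_nonneg hp x)
  split <;> norm_num

lemma restrict_mono {f : (Fin n → Bool) → Bool}
    (hmono : ∀ x y, (∀ j, x j ≤ y j) → f x ≤ f y) (i : Fin n) (b : Bool) :
    ∀ x y, (∀ j, x j ≤ y j) → _root_.restrict f i b x ≤ _root_.restrict f i b y := by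
  intro x y h
  apply hmono
  intro j
  by_cases hj : j = i
  · subst hj; rw [Function.update_self, Function.update_self]
  · rw [Function.update_of_ne hj, Function.update_of_ne hj]; exact h j

lemma restrict_certLe {f : (Fin n → Bool) → Bool} {k : ℕ} (hc : CertLe f k)
    (i : Fin n) (b : Bool) : CertLe (_root_.restrict f i b) k := by
  intro x
  obtain ⟨S, hS, hcard⟩ := hc (Function.update x i b)
  refine ⟨S.erase i, ?_, le_trans (Finset.card_erase_le) hcard⟩
  intro y hy
  unfold _root_.restrict
  apply hS
  intro m hm
  by_cases hmi : m = i
  · subst hmi; rw [Function.update_self, Function.update_self]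
  · rw [Function.update_of_ne hmi, Function.update_of_ne hmi]
    exact hy m (Finset.mem_erase.2 ⟨hmi, hm⟩)

/-- Restricting a coordinate shifts the critical probability: for monotone `f`
with `C(f) ≤ k` and critical probability `pf`, if the restriction `f_{x_i=b}` is
non-constant with critical probability `pb`, then the critical probability moves by
at least `p(f)·Inf_{i,p(f)}^⊕[f]/k` (resp. `(1−p(f))·Inf_{i,p(f)}^⊕[f]/k`). -/
theorem critical_prob_progress {n k : ℕ} (f : (Fin n → Bool) → Bool)
    (hmono : ∀ x y : Fin n → Bool, (∀ j, x j ≤ y j) → f x ≤ f y)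
    (hcert : CertLe f k)
    (pf : ℝ) (hpf : pf ∈ Set.Icc (0 : ℝ) 1) (hcrit : Ep pf f = 1 / 2) (i : Fin n) :
    (∀ p0 ∈ Set.Icc (0 : ℝ) 1, (∃ x y, restrict f i false x ≠ restrict f i false y) →
        Ep p0 (restrict f i false) = 1 / 2 →
        p0 - pf ≥ pf * flipInf i pf f / k) ∧
    (∀ p1 ∈ Set.Icc (0 : ℝ) 1, (∃ x y, restrict f i true x ≠ restrict f i true y) →
        Ep p1 (restrict f i true) = 1 / 2 →
        pf - p1 ≥ (1 - pf) * flipInf i pf f / k) := by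
  classical
  have hkpos : 0 < k := by
    by_contra hk
    push_neg at hk
    interval_cases k
    obtain ⟨S, hS, hcard⟩ := hcert (fun _ => false)
    have hSe : S = ∅ := Finset.card_eq_zero.mp (Nat.le_zero.mp hcard)
    have hconst : ∀ y, f y = f (fun _ => false) := fun y => hS y (by simp [hSe])
    have hE := Ep_const (f (fun _ => false)) hconst pf
    rw [hcrit] at hE
    cases hfb : f (fun _ => false) <;> rw [hfb] at hE <;> norm_num at hE
  have hkR : (0:ℝ) < k := by exact_mod_cast hkpos
  have hI0 : 0 ≤ flipInf i pf f := flipInf_nonneg i hpf f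
  have hsplit := Ep_split f i pf
  have hflip := flipInf_eq f hmono i pf
  constructor
  · intro p0 hp0 hnc0 hc0
    have hm0 := restrict_mono hmono i false
    have hcert0 := restrict_certLe hcert i false
    have hsm := Ep_strictMonoOn hm0 hnc0
    have hE0 : Ep pf (restrict f i false) = 1 / 2 - pf * flipInf i pf f := by
      linear_combination hcrit - hsplit + pf * hflip
    have hple : pf ≤ p0 := by
      by_contra h
      push_neg at h
      have hlt := hsm hp0 hpf h
      simp only at hlt
      rw [hc0, hE0] at hlt
      nlinarith [mul_nonneg hpf.1 hI0]
    have hlip := Ep_lipschitz hm0 hcert0 hpf hp0 hple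
    rw [hc0, hE0] at hlip
    rw [ge_iff_le, div_le_iff₀ hkR]
    nlinarith
  · intro p1 hp1 hnc1 hc1
    have hm1 := restrict_mono hmono i true
    have hcert1 := restrict_certLe hcert i true
    have hsm := Ep_strictMonoOn hm1 hnc1
    have hE1 : Ep pf (restrict f i true) = 1 / 2 + (1 - pf) * flipInf i pf f := by
      linear_combination hcrit - hsplit - (1 - pf) * hflip
    have hple : p1 ≤ pf := by
      by_contra h
      push_neg at h
      have hlt := hsm hpf hp1 h
      simp only at hlt
      rw [hc1, hE1] at hlt
      nlinarith [mul_nonneg (by linarith [hpf.2] : (0:ℝ) ≤ 1 - pf) hI0]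
    have hlip := Ep_lipschitz hm1 hcert1 hp1 hpf hple
    rw [hc1, hE1] at hlip
    rw [ge_iff_le, div_le_iff₀ hkR]
    nlinarith
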